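/- Let g: ℝ²×ℕ₊ → ℂ be a function with ‖(ξ²+η²+π²k²)³ g(ξ,η,k)‖_{L^∞} < ∞. Define G(ξ,η,k,t) = exp(−t(ξ²+η²)/(ξ²+η²+π²k²)²) g(ξ,η,k). Then there is a constant C with Σ_{k≥1} ∫_{ℝ²} |G(ξ,η,k,t)| dξ dη ≤ C ⟨t⟩^{−1} ‖(ξ²+η²+π²k²)³ g‖_{L^∞} for all t > 0, where ⟨t⟩ = max{1,t}. -/

import Mathlib

/-!
Fix a mode `k` and put `a = πk`, `D = ξ² + η² + a²`. The hypothesis gives `‖g‖ ≤ M D⁻³`, so the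
`k`-th integral is at most `M ∫∫ exp (-t (ξ² + η²) / D²) D⁻³`. This weight is dominated by sums of
products `u(ξ) v(η)` of Cauchy and Gaussian profiles, whose iterated integrals are explicit.
For any `t ≥ 0`, drop the exponential and use `D³ ≥ a² (ξ² + a²) (η² + a²)`: this gives `π² / a⁴`.
For `t > 0`: on the disc `ξ² + η² ≤ a²` one has `D ≤ 2a²`, so the exponential is a Gaussian of
width `a² / √t`; off it, `e⁻ˣ ≤ x⁻¹` and `D ≤ 2 (ξ² + η²)` bound the weight by
`2 / (t (ξ² + a²) (η² + a²))`. Both cases give `O(⟨t⟩⁻¹ a⁻²)`, which is summable in `k`.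
-/

open MeasureTheory Real

section IteratedIntegral

variable {α β : Type*} [MeasurableSpace α] [MeasurableSpace β] {μ : Measure α} {ν : Measure β}

theorem integral_integral_le_of_le_mul_add_mul {F : α → β → ℝ} {u₁ u₂ : α → ℝ} {v₁ v₂ : β → ℝ}
    (hF₀ : ∀ x y, 0 ≤ F x y) (hF : ∀ x y, F x y ≤ u₁ x * v₁ y + u₂ x * v₂ y)
    (hu₁ : Integrable u₁ μ) (hv₁ : Integrable v₁ ν) (hu₂ : Integrable u₂ μ)
    (hv₂ : Integrable v₂ ν) :
    ∫ x, ∫ y, F x y ∂ν ∂μ ≤ (∫ x, u₁ x ∂μ) * (∫ y, v₁ y ∂ν) + (∫ x, u₂ x ∂μ) * ∫ y, v₂ y ∂ν := by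
  have inner (x : α) : ∫ y, F x y ∂ν ≤ u₁ x * (∫ y, v₁ y ∂ν) + u₂ x * ∫ y, v₂ y ∂ν := by
    rw [← integral_const_mul, ← integral_const_mul,
      ← integral_add (hv₁.const_mul _) (hv₂.const_mul _)]
    exact integral_mono_of_nonneg (ae_of_all _ (hF₀ x))
      ((hv₁.const_mul _).add (hv₂.const_mul _)) (ae_of_all _ (hF x))
  calc ∫ x, ∫ y, F x y ∂ν ∂μ ≤ ∫ x, (u₁ x * (∫ y, v₁ y ∂ν) + u₂ x * ∫ y, v₂ y ∂ν) ∂μ :=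
        integral_mono_of_nonneg (ae_of_all _ fun x => integral_nonneg (hF₀ x))
          ((hu₁.mul_const _).add (hu₂.mul_const _)) (ae_of_all _ inner)
    _ = _ := by
        rw [integral_add (hu₁.mul_const _) (hu₂.mul_const _), integral_mul_const,
          integral_mul_const]

theorem integral_integral_le_of_le_mul {F : α → β → ℝ} {u : α → ℝ} {v : β → ℝ}
    (hF₀ : ∀ x y, 0 ≤ F x y) (hF : ∀ x y, F x y ≤ u x * v y)
    (hu : Integrable u μ) (hv : Integrable v ν) :
    ∫ x, ∫ y, F x y ∂ν ∂μ ≤ (∫ x, u x ∂μ) * ∫ y, v y ∂ν := by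
  simpa using integral_integral_le_of_le_mul_add_mul (u₂ := 0) (v₂ := 0) hF₀
    (by simpa using hF) hu hv (integrable_zero _ _ _) (integrable_zero _ _ _)

end IteratedIntegral

theorem inv_sq_add_sq_eq {a : ℝ} (ha : a ≠ 0) (x : ℝ) :
    (x ^ 2 + a ^ 2)⁻¹ = (a ^ 2)⁻¹ * (1 + (x / a) ^ 2)⁻¹ := by
  rw [← mul_inv]
  field_simp
  ring

theorem integrable_inv_sq_add_sq {a : ℝ} (ha : a ≠ 0) :
    Integrable fun x : ℝ => (x ^ 2 + a ^ 2)⁻¹ := by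
  simpa only [inv_sq_add_sq_eq ha] using (integrable_inv_one_add_sq.comp_div ha).const_mul _

theorem integral_univ_inv_sq_add_sq {a : ℝ} (ha : a ≠ 0) :
    ∫ x : ℝ, (x ^ 2 + a ^ 2)⁻¹ = π / |a| := by
  simp_rw [inv_sq_add_sq_eq ha]
  rw [integral_const_mul, Measure.integral_comp_div (fun y => (1 + y ^ 2)⁻¹),
    integral_univ_inv_one_add_sq, smul_eq_mul, ← sq_abs a]
  field_simp

noncomputable def decayWeight (t a ξ η : ℝ) : ℝ :=
  exp (-t * (ξ ^ 2 + η ^ 2) / (ξ ^ 2 + η ^ 2 + a ^ 2) ^ 2) / (ξ ^ 2 + η ^ 2 + a ^ 2) ^ 3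

section DecayWeight

variable {t a : ℝ} (ξ η : ℝ)

theorem decayWeight_le (ht : 0 ≤ t) (ha : a ≠ 0) :
    decayWeight t a ξ η ≤ (a ^ 2)⁻¹ * (ξ ^ 2 + a ^ 2)⁻¹ * (η ^ 2 + a ^ 2)⁻¹ := by
  have hexp : exp (-t * (ξ ^ 2 + η ^ 2) / (ξ ^ 2 + η ^ 2 + a ^ 2) ^ 2) ≤ 1 :=
    exp_le_one_iff.mpr (div_nonpos_of_nonpos_of_nonneg (by nlinarith [sq_nonneg ξ, sq_nonneg η])
      (by positivity))
  rw [← mul_inv, ← mul_inv]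
  calc decayWeight t a ξ η ≤ 1 / (ξ ^ 2 + η ^ 2 + a ^ 2) ^ 3 := by
        unfold decayWeight; gcongr
    _ ≤ (a ^ 2 * (ξ ^ 2 + a ^ 2) * (η ^ 2 + a ^ 2))⁻¹ := by
        rw [one_div, pow_three, ← mul_assoc]
        gcongr <;> nlinarith [sq_nonneg ξ, sq_nonneg η]

theorem decayWeight_le_of_le (ht : 0 ≤ t) (ha : a ≠ 0) (hξη : ξ ^ 2 + η ^ 2 ≤ a ^ 2) :
    decayWeight t a ξ η
      ≤ (a ^ 6)⁻¹ * exp (-(t / (4 * a ^ 4)) * ξ ^ 2) * exp (-(t / (4 * a ^ 4)) * η ^ 2) := by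
  set D := ξ ^ 2 + η ^ 2 + a ^ 2
  have hD : a ^ 2 ≤ D := by nlinarith [sq_nonneg ξ, sq_nonneg η]
  have hD' : D ^ 2 ≤ 4 * a ^ 4 := by nlinarith [sq_nonneg ξ, sq_nonneg η]
  rw [mul_assoc, ← exp_add, inv_mul_eq_div]
  unfold decayWeight
  refine div_le_div₀ (exp_nonneg _) ?_ (by positivity)
    (by rw [show a ^ 6 = (a ^ 2) ^ 3 by ring]; gcongr)
  rw [exp_le_exp, show -(t / (4 * a ^ 4)) * ξ ^ 2 + -(t / (4 * a ^ 4)) * η ^ 2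
    = -(t * (ξ ^ 2 + η ^ 2) / (4 * a ^ 4)) by ring, neg_mul, neg_div, neg_le_neg_iff]
  gcongr

theorem decayWeight_le_of_ge (ht : 0 < t) (ha : a ≠ 0) (hξη : a ^ 2 ≤ ξ ^ 2 + η ^ 2) :
    decayWeight t a ξ η ≤ 2 / t * (ξ ^ 2 + a ^ 2)⁻¹ * (η ^ 2 + a ^ 2)⁻¹ := by
  set ρ := ξ ^ 2 + η ^ 2
  set D := ρ + a ^ 2
  have hρ : 0 < ρ := lt_of_lt_of_le (by positivity) hξη
  have hx : 0 < t * ρ / D ^ 2 := by positivity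
  have hexp : exp (-t * ρ / D ^ 2) ≤ (t * ρ / D ^ 2)⁻¹ := by
    rw [neg_mul, neg_div, exp_neg]
    exact inv_anti₀ hx ((le_add_of_nonneg_right zero_le_one).trans (add_one_le_exp _))
  have hP : (ξ ^ 2 + a ^ 2) * (η ^ 2 + a ^ 2) ≤ 2 * (ρ * D) := by
    nlinarith [sq_nonneg ξ, sq_nonneg η, sq_nonneg a]
  calc decayWeight t a ξ η ≤ (t * ρ / D ^ 2)⁻¹ / D ^ 3 := by
        unfold decayWeight; gcongr
    _ = 2 / (t * (2 * (ρ * D))) := by field_simp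
    _ ≤ 2 / (t * ((ξ ^ 2 + a ^ 2) * (η ^ 2 + a ^ 2))) := by gcongr
    _ = 2 / t * (ξ ^ 2 + a ^ 2)⁻¹ * (η ^ 2 + a ^ 2)⁻¹ := by field_simp

theorem decayWeight_le_add (ht : 0 < t) (ha : a ≠ 0) :
    decayWeight t a ξ η
      ≤ (a ^ 6)⁻¹ * exp (-(t / (4 * a ^ 4)) * ξ ^ 2) * exp (-(t / (4 * a ^ 4)) * η ^ 2)
        + 2 / t * (ξ ^ 2 + a ^ 2)⁻¹ * (η ^ 2 + a ^ 2)⁻¹ := by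
  rcases le_total (ξ ^ 2 + η ^ 2) (a ^ 2) with h | h
  · exact (decayWeight_le_of_le ξ η ht.le ha h).trans (le_add_of_nonneg_right (by positivity))
  · exact (decayWeight_le_of_ge ξ η ht ha h).trans (le_add_of_nonneg_left (by positivity))

theorem exp_mul_le_mul_decayWeight {M φ : ℝ} (ha : a ≠ 0)
    (hφ : (ξ ^ 2 + η ^ 2 + a ^ 2) ^ 3 * φ ≤ M) :
    exp (-t * (ξ ^ 2 + η ^ 2) / (ξ ^ 2 + η ^ 2 + a ^ 2) ^ 2) * φ ≤ M * decayWeight t a ξ η := by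
  unfold decayWeight
  rw [mul_comm M, div_mul_eq_mul_div, le_div_iff₀ (by positivity), mul_assoc]
  gcongr
  linarith

end DecayWeight

section Mode

variable {t a M : ℝ} {φ : ℝ → ℝ → ℝ}

theorem integral_integral_exp_mul_le_of_nonneg (ht : 0 ≤ t) (ha : 0 < a)
    (hφ₀ : ∀ ξ η, 0 ≤ φ ξ η) (hφ : ∀ ξ η, (ξ ^ 2 + η ^ 2 + a ^ 2) ^ 3 * φ ξ η ≤ M) :
    ∫ ξ, ∫ η, exp (-t * (ξ ^ 2 + η ^ 2) / (ξ ^ 2 + η ^ 2 + a ^ 2) ^ 2) * φ ξ η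
      ≤ π ^ 2 * M / a ^ 4 := by
  have hM : 0 ≤ M := (mul_nonneg (by positivity) (hφ₀ 0 0)).trans (hφ 0 0)
  calc _ ≤ (∫ ξ, M * (a ^ 2)⁻¹ * (ξ ^ 2 + a ^ 2)⁻¹) * ∫ η, (η ^ 2 + a ^ 2)⁻¹ :=
        integral_integral_le_of_le_mul (fun ξ η => mul_nonneg (exp_nonneg _) (hφ₀ ξ η))
          (fun ξ η => (exp_mul_le_mul_decayWeight ξ η ha.ne' (hφ ξ η)).trans <|
            (mul_le_mul_of_nonneg_left (decayWeight_le ξ η ht ha.ne') hM).trans_eq (by ring))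
          ((integrable_inv_sq_add_sq ha.ne').const_mul _) (integrable_inv_sq_add_sq ha.ne')
    _ = π ^ 2 * M / a ^ 4 := by
        rw [integral_const_mul, integral_univ_inv_sq_add_sq ha.ne', abs_of_pos ha]
        field_simp

theorem integral_integral_exp_mul_le_of_pos (ht : 0 < t) (ha : 0 < a)
    (hφ₀ : ∀ ξ η, 0 ≤ φ ξ η) (hφ : ∀ ξ η, (ξ ^ 2 + η ^ 2 + a ^ 2) ^ 3 * φ ξ η ≤ M) :
    ∫ ξ, ∫ η, exp (-t * (ξ ^ 2 + η ^ 2) / (ξ ^ 2 + η ^ 2 + a ^ 2) ^ 2) * φ ξ η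
      ≤ 2 * π * (2 + π) * M / (t * a ^ 2) := by
  have hM : 0 ≤ M := (mul_nonneg (by positivity) (hφ₀ 0 0)).trans (hφ 0 0)
  set c := t / (4 * a ^ 4) with hc_def
  have hc : 0 < c := by positivity
  calc _ ≤ (∫ ξ, M * (a ^ 6)⁻¹ * exp (-c * ξ ^ 2)) * (∫ η, exp (-c * η ^ 2))
        + (∫ ξ, M * (2 / t) * (ξ ^ 2 + a ^ 2)⁻¹) * ∫ η, (η ^ 2 + a ^ 2)⁻¹ :=
        integral_integral_le_of_le_mul_add_mul
          (fun ξ η => mul_nonneg (exp_nonneg _) (hφ₀ ξ η))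
          (fun ξ η => (exp_mul_le_mul_decayWeight ξ η ha.ne' (hφ ξ η)).trans <|
            (mul_le_mul_of_nonneg_left (decayWeight_le_add ξ η ht ha.ne') hM).trans_eq (by ring))
          ((integrable_exp_neg_mul_sq hc).const_mul _) (integrable_exp_neg_mul_sq hc)
          ((integrable_inv_sq_add_sq ha.ne').const_mul _) (integrable_inv_sq_add_sq ha.ne')
    _ = 2 * π * (2 + π) * M / (t * a ^ 2) := by
        rw [integral_const_mul, integral_const_mul, integral_gaussian, mul_assoc _ √(π / c),
          mul_self_sqrt (by positivity), integral_univ_inv_sq_add_sq ha.ne', abs_of_pos ha, hc_def]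
        field_simp
        ring

theorem integral_integral_exp_mul_le (ht : 0 ≤ t) (ha : 1 ≤ a)
    (hφ₀ : ∀ ξ η, 0 ≤ φ ξ η) (hφ : ∀ ξ η, (ξ ^ 2 + η ^ 2 + a ^ 2) ^ 3 * φ ξ η ≤ M) :
    ∫ ξ, ∫ η, exp (-t * (ξ ^ 2 + η ^ 2) / (ξ ^ 2 + η ^ 2 + a ^ 2) ^ 2) * φ ξ η
      ≤ 2 * π * (2 + π) * (max 1 t)⁻¹ * M / a ^ 2 := by
  have hM : 0 ≤ M := (mul_nonneg (by positivity) (hφ₀ 0 0)).trans (hφ 0 0)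
  rcases le_total t 1 with h | h
  · rw [max_eq_left h, inv_one, mul_one]
    calc _ ≤ π ^ 2 * M / a ^ 4 :=
          integral_integral_exp_mul_le_of_nonneg ht (by linarith) hφ₀ hφ
      _ ≤ π ^ 2 * M / a ^ 2 := by gcongr; nlinarith
      _ ≤ 2 * π * (2 + π) * M / a ^ 2 := by gcongr; nlinarith [pi_pos]
  · rw [max_eq_right h]
    refine (integral_integral_exp_mul_le_of_pos (by linarith) (by linarith) hφ₀ hφ).trans_eq ?_
    field_simp

end Mode

/-- Core frequency-space decay estimate: there is a universal C > 0 such that for any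
g : ℝ²×ℕ₊ → ℂ with (ξ²+η²+π²k²)³‖g(ξ,η,k)‖ ≤ M for all ξ, η, k, and any t > 0,
Σ_{k≥1} ∫_{ℝ²} exp(−t(ξ²+η²)/(ξ²+η²+π²k²)²) ‖g(ξ,η,k)‖ dξ dη ≤ C ⟨t⟩^{−1} M. -/
theorem stmt_10 :
    ∃ C : ℝ, 0 < C ∧ ∀ (g : ℝ → ℝ → ℕ+ → ℂ) (M : ℝ),
      (∀ (ξ η : ℝ) (k : ℕ+), (ξ ^ 2 + η ^ 2 + π ^ 2 * (k : ℝ) ^ 2) ^ 3 * ‖g ξ η k‖ ≤ M) →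
      ∀ t : ℝ, 0 < t →
        (∑' k : ℕ+, ∫ ξ : ℝ, ∫ η : ℝ,
            Real.exp (-t * (ξ ^ 2 + η ^ 2) / (ξ ^ 2 + η ^ 2 + π ^ 2 * (k : ℝ) ^ 2) ^ 2)
              * ‖g ξ η k‖) ≤ C * (max 1 t)⁻¹ * M := by
  have hζ : HasSum (fun k : ℕ+ => ((k : ℝ) ^ 2)⁻¹) (π ^ 2 / 6) :=
    (hasSum_pnat_iff (f := fun n : ℕ => ((n : ℝ) ^ 2)⁻¹)).mpr (by simpa using hasSum_zeta_two)
  refine ⟨π * (2 + π) / 3, by positivity, fun g M hg t ht => ?_⟩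
  set B := 2 * π * (2 + π) * (max 1 t)⁻¹ * M / π ^ 2 with hB
  have hmode (k : ℕ+) : ∫ ξ : ℝ, ∫ η : ℝ,
      exp (-t * (ξ ^ 2 + η ^ 2) / (ξ ^ 2 + η ^ 2 + π ^ 2 * (k : ℝ) ^ 2) ^ 2) * ‖g ξ η k‖
        ≤ B * ((k : ℝ) ^ 2)⁻¹ := by
    have hk : 1 ≤ π * k :=
      one_le_mul_of_one_le_of_one_le (by linarith [pi_gt_three]) (Nat.one_le_cast.mpr k.pos)
    have := integral_integral_exp_mul_le ht.le hk (fun ξ η => norm_nonneg (g ξ η k))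
      (fun ξ η => by rw [mul_pow]; exact hg ξ η k)
    rw [mul_pow] at this
    exact this.trans_eq (by rw [hB]; field_simp)
  have hsum := hζ.summable.mul_left B
  calc _ ≤ ∑' k : ℕ+, B * ((k : ℝ) ^ 2)⁻¹ :=
        (hsum.of_nonneg_of_le (fun k => integral_nonneg fun ξ => integral_nonneg fun η =>
          by positivity) hmode).tsum_le_tsum hmode hsum
    _ = π * (2 + π) / 3 * (max 1 t)⁻¹ * M := by
        rw [tsum_mul_left, hζ.tsum_eq, hB]
        field_simp
        ring
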